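/- Let H1 and H2 be hypergraphs with V(H1) ⊆ V(H2) and a bijection φ: E(H1) → E(H2) with e ⊆ φ(e) for all e ∈ E(H1). If H2 has an Euler family F2 such that every edge e of H2 is traversed in F2 only via vertices lying in φ⁻¹(e), then H1 has an Euler family, obtained from F2 by replacing each edge e with φ⁻¹(e). -/

import Mathlib

set_option linter.unusedSectionVars false

universe u

variable {V : Type u} {β : Type u} {I : Type u}

/-- A hypergraph on vertex type `V` with edge-index type `β`: a finite vertex set,
a finite (multi)set of edges indexed by `β`, and an incidence map giving the
vertex set of each edge. -/
structure Hypergraph' (V β : Type u) [DecidableEq V] where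
  verts : Finset V
  edges : Finset β
  inc : β → Finset V
  inc_sub : ∀ e ∈ edges, inc e ⊆ verts

namespace Hypergraph'

variable [DecidableEq V] [DecidableEq β] [DecidableEq I]

/-- A walk in a hypergraph: an alternating sequence of vertices and edges,
consecutive vertices being distinct and both contained in the intervening edge. -/
inductive Walk (H : Hypergraph' V β) : V → V → Type u where
  | nil (v : V) (hv : v ∈ H.verts) : Walk H v v
  | cons (u v w : V) (e : β) (he : e ∈ H.edges) (hu : u ∈ H.inc e) (hv : v ∈ H.inc e)
      (hne : u ≠ v) (p : Walk H v w) : Walk H u w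

namespace Walk

/-- The list of steps `(v_{i-1}, e_i, v_i)` of a walk. -/
def steps {H : Hypergraph' V β} : ∀ {u v : V}, H.Walk u v → List (V × β × V)
  | _, _, .nil _ _ => []
  | _, _, .cons u a _ e _ _ _ _ p => (u, e, a) :: p.steps

/-- The list of edges traversed by a walk, in order. -/
def edgeList {H : Hypergraph' V β} {u v : V} (w : H.Walk u v) : List β :=
  w.steps.map (fun s => s.2.1)

/-- The anchors of a walk: the vertices appearing in its sequence. -/
def anchors {H : Hypergraph' V β} {u v : V} (w : H.Walk u v) : List V :=
  u :: w.steps.map (fun s => s.2.2)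

end Walk

/-- A closed trail: a closed walk of length at least 2 with pairwise distinct edges. -/
structure ClosedTrail (H : Hypergraph' V β) where
  base : V
  walk : H.Walk base base
  two_le : 2 ≤ walk.edgeList.length
  nodup : walk.edgeList.Nodup

/-- The closed trail `T` traverses the vertex `u` via the edge `e`, i.e. `eu` or `ue`
is a subsequence of the walk. -/
def ClosedTrail.traverses {H : Hypergraph' V β} (T : H.ClosedTrail) (u : V) (e : β) : Prop :=
  ∃ s ∈ T.walk.steps, s.2.1 = e ∧ (s.1 = u ∨ s.2.2 = u)

/-- An Euler family: a family of pairwise edge-disjoint and anchor-disjoint closed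
trails jointly traversing every edge exactly once. -/
def IsEulerFamily (H : Hypergraph' V β) {κ : Type} (T : κ → H.ClosedTrail) : Prop :=
  (∀ k l, k ≠ l → ∀ e, e ∈ (T k).walk.edgeList → e ∉ (T l).walk.edgeList) ∧
  (∀ k l, k ≠ l → ∀ v, v ∈ (T k).walk.anchors → v ∉ (T l).walk.anchors) ∧
  (∀ e ∈ H.edges, ∃ k, e ∈ (T k).walk.edgeList)

def HasEulerFamily (H : Hypergraph' V β) : Prop :=
  ∃ (κ : Type) (T : κ → H.ClosedTrail), H.IsEulerFamily T

/-- A non-empty Euler family. -/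
def HasNonemptyEulerFamily (H : Hypergraph' V β) : Prop :=
  ∃ (κ : Type) (T : κ → H.ClosedTrail), Nonempty κ ∧ H.IsEulerFamily T

/-- An Euler family is spanning if every vertex is an anchor of some trail in it. -/
def IsSpanningFamily (H : Hypergraph' V β) {κ : Type} (T : κ → H.ClosedTrail) : Prop :=
  ∀ v ∈ H.verts, ∃ k, v ∈ (T k).walk.anchors

/-- An Euler tour: a closed trail traversing every edge (exactly once). -/
def IsEulerTour (H : Hypergraph' V β) (T : H.ClosedTrail) : Prop :=
  ∀ e ∈ H.edges, e ∈ T.walk.edgeList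

def HasEulerTour (H : Hypergraph' V β) : Prop := ∃ T : H.ClosedTrail, H.IsEulerTour T

/-- A hypergraph is connected if every two vertices are joined by a walk. -/
def Connected (H : Hypergraph' V β) : Prop :=
  ∀ u ∈ H.verts, ∀ v ∈ H.verts, Nonempty (H.Walk u v)

/-- `H \ F` : deletion of the edges in `F`. -/
def edel (H : Hypergraph' V β) (F : Finset β) : Hypergraph' V β where
  verts := H.verts
  edges := H.edges \ F
  inc := H.inc
  inc_sub := fun e he => H.inc_sub e (Finset.mem_sdiff.mp he).1

/-- The subhypergraph induced by a vertex set `U`. -/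
def induce (H : Hypergraph' V β) (U : Finset V) : Hypergraph' V β where
  verts := U
  edges := H.edges.filter (fun e => (H.inc e ∩ U).Nonempty)
  inc := fun e => H.inc e ∩ U
  inc_sub := fun _ _ => Finset.inter_subset_right

/-- The degree of a vertex: the number of edges incident with it. -/
def degree (H : Hypergraph' V β) (v : V) : ℕ :=
  (H.edges.filter (fun e => v ∈ H.inc e)).card

/-- `[S, V - S]_H` : the set of edges meeting both `S` and its complement. -/
def cutSet (H : Hypergraph' V β) (S : Finset V) : Finset β :=
  H.edges.filter (fun e => (H.inc e ∩ S).Nonempty ∧ (H.inc e ∩ (H.verts \ S)).Nonempty)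

/-- An edge cut: a set of edges of the form `[S, V - S]_H` for nonempty proper `S`. -/
def IsEdgeCut (H : Hypergraph' V β) (F : Finset β) : Prop :=
  ∃ S : Finset V, S ⊆ H.verts ∧ S.Nonempty ∧ S ≠ H.verts ∧ F = H.cutSet S

/-- A minimal edge cut: an edge cut no proper subset of which is an edge cut. -/
def IsMinimalEdgeCut (H : Hypergraph' V β) (F : Finset β) : Prop :=
  H.IsEdgeCut F ∧ ∀ F' ⊂ F, ¬ H.IsEdgeCut F'

/-- `C` is the vertex set of a connected component of `H` : nonempty, connected as an
induced subhypergraph, and closed under the edges of `H`. -/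
def IsComponent (H : Hypergraph' V β) (C : Finset V) : Prop :=
  C.Nonempty ∧ C ⊆ H.verts ∧ (H.induce C).Connected ∧
    ∀ e ∈ H.edges, (H.inc e ∩ C).Nonempty → H.inc e ⊆ C

/-- `P` is a partition of `V(H)` into unions of the vertex sets of the connected
components of `H \ F`. -/
def IsCompUnionPartition (H : Hypergraph' V β) (F : Finset β) (P : I → Finset V) : Prop :=
  (∀ i, (P i).Nonempty) ∧ (∀ i, P i ⊆ H.verts) ∧ (∀ v ∈ H.verts, ∃! i, v ∈ P i) ∧
    ∀ e ∈ H.edges, e ∉ F → ∀ i, (H.inc e ∩ P i).Nonempty → H.inc e ⊆ P i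

/-- `P` lists exactly the vertex sets of the connected components of `H \ F`. -/
def IsComponentPartition (H : Hypergraph' V β) (F : Finset β) (P : I → Finset V) : Prop :=
  H.IsCompUnionPartition F P ∧ ∀ i, ((H.edel F).induce (P i)).Connected

/-- The union `P i ∪ P j` associated with an unordered pair. -/
def pairFinset (P : I → Finset V) : Sym2 I → Finset V :=
  Sym2.lift ⟨fun i j => P i ∪ P j, fun _ _ => Finset.union_comm _ _⟩

/-- `α : F → I^[2]` is an edge cut assignment. -/
def IsECA (H : Hypergraph' V β) (F : Finset β) (P : I → Finset V) (α : β → Sym2 I) : Prop :=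
  ∀ f ∈ F, ∀ i j, α f = s(i, j) →
    (H.inc f ∩ P i).Nonempty ∧ (H.inc f ∩ P j).Nonempty ∧
      (i = j → 2 ≤ (H.inc f ∩ P i).card)

/-- The hypergraph `H^α` associated with an edge cut assignment `α`:
each `f ∈ F` is replaced by `f^α = f ∩ (V_i ∪ V_j)` where `α f = ij`. -/
def assign (H : Hypergraph' V β) (F : Finset β) (P : I → Finset V) (α : β → Sym2 I) :
    Hypergraph' V β where
  verts := H.verts
  edges := H.edges
  inc := fun e => if e ∈ F then H.inc e ∩ pairFinset P (α e) else H.inc e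
  inc_sub := by
    intro e he
    try dsimp only
    split
    · exact Finset.inter_subset_left.trans (H.inc_sub e he)
    · exact H.inc_sub e he

/-- The multigraph `G^α` associated with an edge cut assignment `α`, viewed as a
hypergraph on the vertex set `I` whose edges (indexed by `F`) are the pairs `α f`. -/
def assignGraph [Fintype I] (F : Finset β) (α : β → Sym2 I) : Hypergraph' I β where
  verts := Finset.univ
  edges := F
  inc := fun f => Sym2.lift ⟨fun i j => ({i, j} : Finset I), fun _ _ => Finset.pair_comm _ _⟩ (α f)
  inc_sub := fun _ _ => fun _ _ => Finset.mem_univ _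

/-- The collapsed hypergraph `H ∘ S` with collapsed vertex `uc`. -/
def collapse (H : Hypergraph' V β) (S : Finset V) (uc : V) : Hypergraph' V β where
  verts := (H.verts \ S) ∪ {uc}
  edges := H.edges.filter (fun e => (H.inc e ∩ (H.verts \ S)).Nonempty)
  inc := fun e => if (H.inc e ∩ S).Nonempty then (H.inc e \ S) ∪ {uc} else H.inc e
  inc_sub := by
    intro e he
    rw [Finset.mem_filter] at he
    try dsimp only
    split
    · intro x hx
      rcases Finset.mem_union.mp hx with h | h
      · exact Finset.mem_union_left _
          (Finset.mem_sdiff.mpr ⟨H.inc_sub e he.1 (Finset.mem_sdiff.mp h).1,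
            (Finset.mem_sdiff.mp h).2⟩)
      · exact Finset.mem_union_right _ h
    · intro x hx
      rename_i h
      exact Finset.mem_union_left _ (Finset.mem_sdiff.mpr
        ⟨H.inc_sub e he.1 hx, fun hxS => h ⟨x, Finset.mem_inter.mpr ⟨hx, hxS⟩⟩⟩)

/-- Lifting a walk along an inclusion of hypergraphs. -/
def Walk.lift {H1 H2 : Hypergraph' V β} (hv : H1.verts ⊆ H2.verts) (he : H1.edges ⊆ H2.edges)
    (hi : ∀ e ∈ H1.edges, H1.inc e ⊆ H2.inc e) : ∀ {u v : V}, H1.Walk u v → H2.Walk u v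
  | _, _, .nil x hx => .nil x (hv hx)
  | _, _, .cons u a w e hee hu hvv hne p =>
      .cons u a w e (he hee) (hi e hee hu) (hi e hee hvv) hne (Walk.lift hv he hi p)

theorem Walk.steps_lift {H1 H2 : Hypergraph' V β} (hv : H1.verts ⊆ H2.verts)
    (he : H1.edges ⊆ H2.edges) (hi : ∀ e ∈ H1.edges, H1.inc e ⊆ H2.inc e)
    {u v : V} (w : H1.Walk u v) : (w.lift hv he hi).steps = w.steps := by
  induction w with
  | nil => rfl
  | cons u a w e hee hu hvv hne p ih => simp [Walk.lift, Walk.steps, ih]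

theorem Walk.edgeList_lift {H1 H2 : Hypergraph' V β} (hv : H1.verts ⊆ H2.verts)
    (he : H1.edges ⊆ H2.edges) (hi : ∀ e ∈ H1.edges, H1.inc e ⊆ H2.inc e)
    {u v : V} (w : H1.Walk u v) : (w.lift hv he hi).edgeList = w.edgeList := by
  simp [Walk.edgeList, Walk.steps_lift]

theorem Walk.anchors_lift {H1 H2 : Hypergraph' V β} (hv : H1.verts ⊆ H2.verts)
    (he : H1.edges ⊆ H2.edges) (hi : ∀ e ∈ H1.edges, H1.inc e ⊆ H2.inc e)
    {u v : V} (w : H1.Walk u v) : (w.lift hv he hi).anchors = w.anchors := by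
  simp [Walk.anchors, Walk.steps_lift]

/-- Lifting a closed trail along an inclusion of hypergraphs. -/
def ClosedTrail.lift {H1 H2 : Hypergraph' V β} (hv : H1.verts ⊆ H2.verts)
    (he : H1.edges ⊆ H2.edges) (hi : ∀ e ∈ H1.edges, H1.inc e ⊆ H2.inc e)
    (T : H1.ClosedTrail) : H2.ClosedTrail where
  base := T.base
  walk := T.walk.lift hv he hi
  two_le := by rw [Walk.edgeList_lift]; exact T.two_le
  nodup := by rw [Walk.edgeList_lift]; exact T.nodup

theorem Walk.steps_getLast {H : Hypergraph' V β} {u v : V} (w : H.Walk u v)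
    (h : w.steps ≠ []) : (w.steps.getLast h).2.2 = v := by
  induction w with
  | nil => simp [Walk.steps] at h
  | cons u a w e he hu hva hne p ih =>
    cases p with
    | nil x hx => simp [Walk.steps]
    | cons b c d f hf hb hc hbc q =>
      simp only [Walk.steps]
      rw [List.getLast_cons (by simp [Walk.steps])]
      exact ih _

/-- Pull back a walk along an edge bijection. -/
noncomputable def Walk.pull (H1 H2 : Hypergraph' V β) (φ : β → β) :
    ∀ {u v : V}, (w : H2.Walk u v) →
    (∀ s ∈ w.steps, ∃ f ∈ H1.edges, φ f = s.2.1 ∧ s.1 ∈ H1.inc f ∧ s.2.2 ∈ H1.inc f) →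
    v ∈ H1.verts → H1.Walk u v
  | _, _, .nil x _, _, hv => .nil x hv
  | _, _, .cons u a w e _ _ _ hne p, hsteps, hv =>
      let h := hsteps (u, e, a) (by simp [Walk.steps])
      .cons u a w h.choose h.choose_spec.1 h.choose_spec.2.2.1 h.choose_spec.2.2.2 hne
        (Walk.pull H1 H2 φ p (fun s hs => hsteps s (by simp [Walk.steps, hs])) hv)

theorem Walk.pull_spec (H1 H2 : Hypergraph' V β) (φ : β → β) {u v : V} (w : H2.Walk u v)
    (hsteps : ∀ s ∈ w.steps, ∃ f ∈ H1.edges, φ f = s.2.1 ∧ s.1 ∈ H1.inc f ∧ s.2.2 ∈ H1.inc f)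
    (hv : v ∈ H1.verts) :
    (w.pull H1 H2 φ hsteps hv).anchors = w.anchors ∧
    (w.pull H1 H2 φ hsteps hv).edgeList.map φ = w.edgeList ∧
    ∀ e ∈ (w.pull H1 H2 φ hsteps hv).edgeList, e ∈ H1.edges := by
  induction w with
  | nil x hx => simp [Walk.pull, Walk.anchors, Walk.edgeList, Walk.steps]
  | cons u a w e he hu hva hne p ih =>
      obtain ⟨h1, h2, h3⟩ := ih (fun s hs => hsteps s (by simp [Walk.steps, hs])) hv
      have hch := (hsteps (u, e, a) (by simp [Walk.steps])).choose_spec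
      refine ⟨?_, ?_, ?_⟩
      · simp only [Walk.pull, Walk.anchors, Walk.steps, List.map_cons] at h1 ⊢
        simpa using congrArg (fun l => u :: l.tail) h1
      · simp only [Walk.pull, Walk.edgeList, Walk.steps, List.map_cons] at h2 ⊢
        exact congrArg₂ List.cons hch.2.1 h2
      · simp only [Walk.pull, Walk.edgeList, Walk.steps, List.map_cons, List.mem_cons] at h3 ⊢
        rintro f (rfl | hf)
        · exact hch.1
        · exact h3 f hf


end Hypergraph'
open Hypergraph' in
/-- Lemma 2.2(ii): if `H2` has an Euler family traversing each edge only via vertices of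
its `φ`-preimage, then `H1` has an Euler family obtained by replacing each edge `e` with
`φ⁻¹(e)`. -/
theorem eulerFamily_pullback_of_edge_bijection
    {V β : Type} [DecidableEq V] [DecidableEq β]
    (H1 H2 : Hypergraph' V β) (φ : β → β)
    (hverts : H1.verts ⊆ H2.verts)
    (hbij : Set.BijOn φ ↑H1.edges ↑H2.edges)
    (hsub : ∀ e ∈ H1.edges, H1.inc e ⊆ H2.inc (φ e))
    {κ : Type} (T2 : κ → H2.ClosedTrail) (h2 : H2.IsEulerFamily T2)
    (htrav : ∀ k, ∀ s ∈ (T2 k).walk.steps,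
      ∃ f ∈ H1.edges, φ f = s.2.1 ∧ s.1 ∈ H1.inc f ∧ s.2.2 ∈ H1.inc f) :
    ∃ T1 : κ → H1.ClosedTrail, H1.IsEulerFamily T1 ∧
      ∀ k, (T1 k).walk.anchors = (T2 k).walk.anchors ∧
        (T1 k).walk.edgeList.map φ = (T2 k).walk.edgeList := by
  have hbase : ∀ k, (T2 k).base ∈ H1.verts := by
    intro k
    have hne : (T2 k).walk.steps ≠ [] := by
      have h2l := (T2 k).two_le
      intro h; simp [Walk.edgeList, h] at h2l
    obtain ⟨f, hf, -, -, hmem⟩ := htrav k _ (List.getLast_mem hne)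
    rw [Walk.steps_getLast (T2 k).walk hne] at hmem
    exact H1.inc_sub f hf hmem
  refine ⟨fun k => ⟨(T2 k).base, (T2 k).walk.pull H1 H2 φ (htrav k) (hbase k), ?_, ?_⟩,
    ?_, fun k => ⟨(Walk.pull_spec H1 H2 φ (T2 k).walk (htrav k) (hbase k)).1,
      (Walk.pull_spec H1 H2 φ (T2 k).walk (htrav k) (hbase k)).2.1⟩⟩
  · have := (Walk.pull_spec H1 H2 φ (T2 k).walk (htrav k) (hbase k)).2.1
    have hlen := congrArg List.length this
    rw [List.length_map] at hlen
    rw [hlen]; exact (T2 k).two_le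
  · have := (Walk.pull_spec H1 H2 φ (T2 k).walk (htrav k) (hbase k)).2.1
    exact List.Nodup.of_map φ (this ▸ (T2 k).nodup)
  obtain ⟨hed, han, hsurj⟩ := h2
  have hspec := fun k => Walk.pull_spec H1 H2 φ (T2 k).walk (htrav k) (hbase k)
  refine ⟨?_, ?_, ?_⟩
  · intro k l hkl e hek hel
    have h1 : φ e ∈ (T2 k).walk.edgeList := (hspec k).2.1 ▸ List.mem_map_of_mem (f := φ) hek
    have h2' : φ e ∈ (T2 l).walk.edgeList := (hspec l).2.1 ▸ List.mem_map_of_mem (f := φ) hel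
    exact hed k l hkl (φ e) h1 h2'
  · intro k l hkl v hvk hvl
    exact han k l hkl v ((hspec k).1 ▸ hvk) ((hspec l).1 ▸ hvl)
  · intro e he
    obtain ⟨k, hk⟩ := hsurj (φ e) (hbij.1 he)
    rw [← (hspec k).2.1, List.mem_map] at hk
    obtain ⟨f, hf, hfe⟩ := hk
    have : f = e := hbij.2.1 ((hspec k).2.2 f hf) he hfe
    exact ⟨k, this ▸ hf⟩
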